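/- Let (B¹, i¹, j¹) be a stable framed representation on (V¹, W¹) and (B², i², j²) a stable framed representation on (V², W²), and let (C, I, J) ∈ E(V¹, V²) ⊕ L(W¹, V²) ⊕ L(V¹, W²) be arbitrary. Define a framed representation (B, i, j) on (V¹ ⊕ V², W¹ ⊕ W²) by B_h(v¹, v²) = (B¹_h v¹, C_h v¹ + B²_h v²), i_k(w¹, w²) = (i¹_k w¹, I_k w¹ + i²_k w²), j_k(v¹, v²) = (j¹_k v¹, J_k v¹ + j²_k v²). Then (B, i, j) is stable. -/
import Mathlib


/-!
Framed representations of a quiver attached to a finite graph without edge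
loops, with vertex set `I` and edge set `Ω`, where the edge `e ∈ Ω` joins the
vertices `s e` and `t e`.  The set `H` of oriented edges is `Ω ⊕ Ω`: each
edge occurs with both orientations.  For an `I`-graded complex vector space
`V`, a datum `B ∈ E(V,V)` is encoded by its components `Bp e : V (s e) → V (t e)`
(along `e` oriented from `s e` to `t e`) and `Bm e : V (t e) → V (s e)` (along
the reversed orientation); a datum in `L(V,W)` is a family of maps
`V k → W k`.
-/

noncomputable section

variable {I : Type*} {Ω : Type*}

/-- A framed representation `(B, i, j) ∈ E(V,V) ⊕ L(W,V) ⊕ L(V,W)` on the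
pair `(V, W)` of `I`-graded vector spaces. -/
structure FramedRep (s t : Ω → I) (V W : I → Type*)
    [∀ k, AddCommGroup (V k)] [∀ k, Module ℂ (V k)]
    [∀ k, AddCommGroup (W k)] [∀ k, Module ℂ (W k)] where
  Bp : ∀ e, V (s e) →ₗ[ℂ] V (t e)
  Bm : ∀ e, V (t e) →ₗ[ℂ] V (s e)
  i : ∀ k, W k →ₗ[ℂ] V k
  j : ∀ k, V k →ₗ[ℂ] W k

/-- Stability: the only `B`-invariant `I`-graded subspace `S ⊆ V` contained
in `Ker j` is `S = 0`. -/
def FramedRep.IsStable {s t : Ω → I} {V W : I → Type*}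
    [∀ k, AddCommGroup (V k)] [∀ k, Module ℂ (V k)]
    [∀ k, AddCommGroup (W k)] [∀ k, Module ℂ (W k)]
    (R : FramedRep s t V W) : Prop :=
  ∀ S : ∀ k, Submodule ℂ (V k),
    (∀ e, ∀ x ∈ S (s e), R.Bp e x ∈ S (t e)) →
    (∀ e, ∀ x ∈ S (t e), R.Bm e x ∈ S (s e)) →
    (∀ k, ∀ x ∈ S k, R.j k x = 0) →
    ∀ k, S k = ⊥

/-- The block-triangular map `(x, y) ↦ (f x, g x + h y)`. -/
def triMap {A B A' B' : Type*}
    [AddCommGroup A] [Module ℂ A] [AddCommGroup B] [Module ℂ B]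
    [AddCommGroup A'] [Module ℂ A'] [AddCommGroup B'] [Module ℂ B']
    (f : A →ₗ[ℂ] A') (g : A →ₗ[ℂ] B') (h : B →ₗ[ℂ] B') :
    (A × B) →ₗ[ℂ] (A' × B') :=
  LinearMap.prod (f ∘ₗ LinearMap.fst ℂ A B)
    (g ∘ₗ LinearMap.fst ℂ A B + h ∘ₗ LinearMap.snd ℂ A B)

/-- given stable framed representations `(B¹,i¹,j¹)` on
`(V¹,W¹)` and `(B²,i²,j²)` on `(V²,W²)`, and arbitrary
`(C,I,J) ∈ E(V¹,V²) ⊕ L(W¹,V²) ⊕ L(V¹,W²)`, the block-triangular framed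
representation `(B,i,j)` on `(V¹ ⊕ V², W¹ ⊕ W²)` defined by
`B_h(v¹,v²) = (B¹_h v¹, C_h v¹ + B²_h v²)`,
`i_k(w¹,w²) = (i¹_k w¹, I_k w¹ + i²_k w²)`,
`j_k(v¹,v²) = (j¹_k v¹, J_k v¹ + j²_k v²)` is stable. -/
theorem triangular_extension_isStable [Fintype I] [Fintype Ω]
    {s t : Ω → I} (hloop : ∀ e, s e ≠ t e)
    {V₁ W₁ V₂ W₂ : I → Type*}
    [∀ k, AddCommGroup (V₁ k)] [∀ k, Module ℂ (V₁ k)]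
    [∀ k, FiniteDimensional ℂ (V₁ k)]
    [∀ k, AddCommGroup (W₁ k)] [∀ k, Module ℂ (W₁ k)]
    [∀ k, FiniteDimensional ℂ (W₁ k)]
    [∀ k, AddCommGroup (V₂ k)] [∀ k, Module ℂ (V₂ k)]
    [∀ k, FiniteDimensional ℂ (V₂ k)]
    [∀ k, AddCommGroup (W₂ k)] [∀ k, Module ℂ (W₂ k)]
    [∀ k, FiniteDimensional ℂ (W₂ k)]
    (R₁ : FramedRep s t V₁ W₁) (R₂ : FramedRep s t V₂ W₂)
    (h₁ : R₁.IsStable) (h₂ : R₂.IsStable)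
    (C : ∀ e, V₁ (s e) →ₗ[ℂ] V₂ (t e)) (C' : ∀ e, V₁ (t e) →ₗ[ℂ] V₂ (s e))
    (Ih : ∀ k, W₁ k →ₗ[ℂ] V₂ k) (Jh : ∀ k, V₁ k →ₗ[ℂ] W₂ k) :
    (FramedRep.mk
      (fun e => triMap (R₁.Bp e) (C e) (R₂.Bp e))
      (fun e => triMap (R₁.Bm e) (C' e) (R₂.Bm e))
      (fun k => triMap (R₁.i k) (Ih k) (R₂.i k))
      (fun k => triMap (R₁.j k) (Jh k) (R₂.j k)) :
      FramedRep s t (fun k => V₁ k × V₂ k) (fun k => W₁ k × W₂ k)).IsStable := by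
  intro S hBp hBm hj
  -- Project to the first factor
  set S₁ : ∀ k, Submodule ℂ (V₁ k) :=
    fun k => (S k).map (LinearMap.fst ℂ (V₁ k) (V₂ k)) with hS₁def
  have hS₁ : ∀ k, S₁ k = ⊥ := by
    apply h₁
    · intro e x hx
      rcases hx with ⟨z, hz, rfl⟩
      exact ⟨_, hBp e z hz, rfl⟩
    · intro e x hx
      rcases hx with ⟨z, hz, rfl⟩
      exact ⟨_, hBm e z hz, rfl⟩
    · intro k x hx
      rcases hx with ⟨z, hz, rfl⟩
      have := hj k z hz
      exact congrArg Prod.fst this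
  have hfst : ∀ k, ∀ z ∈ S k, z.1 = 0 := by
    intro k z hz
    have : z.1 ∈ S₁ k := ⟨z, hz, rfl⟩
    simpa [hS₁ k] using this
  -- Project to the second factor
  set S₂ : ∀ k, Submodule ℂ (V₂ k) :=
    fun k => (S k).map (LinearMap.snd ℂ (V₁ k) (V₂ k)) with hS₂def
  have hS₂ : ∀ k, S₂ k = ⊥ := by
    apply h₂
    · intro e x hx
      rcases hx with ⟨z, hz, rfl⟩
      have h1 : z.1 = 0 := hfst _ z hz
      refine ⟨_, hBp e z hz, ?_⟩
      simp [triMap, h1]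
    · intro e x hx
      rcases hx with ⟨z, hz, rfl⟩
      have h1 : z.1 = 0 := hfst _ z hz
      refine ⟨_, hBm e z hz, ?_⟩
      simp [triMap, h1]
    · intro k x hx
      rcases hx with ⟨z, hz, rfl⟩
      have h1 : z.1 = 0 := hfst _ z hz
      have := congrArg Prod.snd (hj k z hz)
      simpa [triMap, h1] using this
  intro k
  rw [Submodule.eq_bot_iff]
  intro z hz
  have h1 : z.1 = 0 := hfst k z hz
  have h2 : z.2 ∈ S₂ k := ⟨z, hz, rfl⟩
  rw [hS₂ k] at h2
  exact Prod.ext h1 h2
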